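/- The composition s₁ ∘ s₂ of the switch actions on L_Y equals the Kac translation T_{H₁−H₂} (as ℤ-linear endomorphisms of L_Y). -/

import Mathlib

open Finset

/-- `L_Y`: the free ℤ-module with basis `H₁, H₂, E₁, …, E₈`; index `0` is `H₁`,
index `1` is `H₂`, and index `i+1` is `Eᵢ` for `i = 1,…,8`. -/
abbrev LY : Type := Fin 10 → ℤ

noncomputable def basisY : Module.Basis (Fin 10) ℤ LY := Pi.basisFun ℤ (Fin 10)

/-- The basis vectors of `L_Y`: `bY 0 = H₁`, `bY 1 = H₂`, `bY (i+1) = Eᵢ` for `i = 1,…,8`. -/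
noncomputable def bY (a : Fin 10) : LY := basisY a

/-- The symmetric bilinear form on `L_Y` with `⟨H₁,H₂⟩ = 1`, `⟨H₁,H₁⟩ = ⟨H₂,H₂⟩ = 0`,
`⟨Eᵢ,Eᵢ⟩ = -1`, and all other products of distinct basis vectors `0`. -/
noncomputable def formY : LY →ₗ[ℤ] LY →ₗ[ℤ] ℤ :=
  Matrix.toLinearMap₂' ℤ (Matrix.of (fun a b : Fin 10 =>
    if (a = 0 ∧ b = 1) ∨ (a = 1 ∧ b = 0) then (1 : ℤ)
    else if a = b ∧ a ≠ 0 ∧ a ≠ 1 then -1 else 0))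

/-- The anticanonical class `δ = 2H₁ + 2H₂ - E₁ - ⋯ - E₈`. -/
noncomputable def deltaY : LY :=
  (2 : ℤ) • bY 0 + (2 : ℤ) • bY 1 - ∑ k ∈ ({0, 1} : Finset (Fin 10))ᶜ, bY k

/-- The Kac translation `T_α(λ) = λ + ⟨δ,λ⟩α + (⟨δ,λ⟩ - ⟨α,λ⟩)δ` on `L_Y`. -/
noncomputable def kacY (α : LY) : LY →ₗ[ℤ] LY :=
  LinearMap.id + (formY deltaY).smulRight α + (formY deltaY - formY α).smulRight deltaY

/-- The vertical switch action `s₁` on `L_Y`: `s₁(H₁) = H₁`,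
`s₁(H₂) = 4H₁ + H₂ - Σₖ Eₖ`, `s₁(Eⱼ) = H₁ - Eⱼ`. -/
noncomputable def sw1 : LY →ₗ[ℤ] LY :=
  basisY.constr ℤ (fun a =>
    if a = 0 then bY 0
    else if a = 1 then
      (4 : ℤ) • bY 0 + bY 1 - ∑ k ∈ ({0, 1} : Finset (Fin 10))ᶜ, bY k
    else bY 0 - bY a)

/-- The horizontal switch action `s₂` on `L_Y`: `s₂(H₁) = H₁ + 4H₂ - Σₖ Eₖ`,
`s₂(H₂) = H₂`, `s₂(Eⱼ) = H₂ - Eⱼ`. -/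
noncomputable def sw2 : LY →ₗ[ℤ] LY :=
  basisY.constr ℤ (fun a =>
    if a = 0 then
      bY 0 + (4 : ℤ) • bY 1 - ∑ k ∈ ({0, 1} : Finset (Fin 10))ᶜ, bY k
    else if a = 1 then bY 1
    else bY 1 - bY a)

lemma bY_eq (a : Fin 10) : bY a = Pi.single a 1 := by
  simp [bY, basisY]

set_option maxHeartbeats 1000000 in
/-- The QRT map `s₁ ∘ s₂` equals the Kac translation `T_{H₁-H₂}` on `L_Y`. -/
theorem sw1_comp_sw2_eq_kacY : sw1 ∘ₗ sw2 = kacY (bY 0 - bY 1) := by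
  apply basisY.ext
  intro a
  simp only [LinearMap.comp_apply, sw1, sw2, kacY, deltaY, formY,
    Module.Basis.constr_basis, Module.Basis.constr_apply_fintype, Pi.basisFun_repr,
    LinearMap.add_apply, LinearMap.sub_apply, LinearMap.id_apply,
    LinearMap.smulRight_apply, Matrix.toLinearMap₂'_apply, Matrix.of_apply,
    show (basisY : Fin 10 → LY) = bY from rfl, bY_eq]
  fin_cases a <;> decide
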